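/- arXiv:1202.3981 — 7 statements merged into one kernel-verified Lean document; each statement's English description precedes it below -/
import Mathlib

section
/- For every nonnegative integer n, the convolution sum of harmonic numbers satisfies ∑_{k=0}^{n} H_k · H_{n-k} = (n+1)·[(H_{n+1} − 1)² − H_{n+1}^{(2)} + 1]. -/
/-!
Write `S n = ∑_{i+j=n} H i H j` and `C n = ∑_{i+j=n} H j / (i+1)`. Since `H (j+1) = H j + 1/(j+1)`,
the difference `S (n+1) - S n` is `C n`, and by the same step `C (n+1) - C n` is
`∑_{i+j=n} 1/((i+1)(j+1)) = 2 H (n+1) / (n+2)` (partial fractions). Summing this gives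
`C n = H (n+1)^2 - H^{(2)} (n+1)`, and summing `C` once more gives the closed form.
-/

open Finset

/-- The harmonic number `H n = ∑_{k=1}^n 1/k`. -/
def H (n : ℕ) : ℚ := ∑ k ∈ Finset.range n, (1 : ℚ) / ((k : ℚ) + 1)

/-- The generalized harmonic number `H n ^ (m) = ∑_{k=1}^n 1/k^m`. -/
def Hgen (m n : ℕ) : ℚ := ∑ k ∈ Finset.range n, (1 : ℚ) / ((k : ℚ) + 1) ^ m

lemma H_zero : H 0 = 0 := rfl

lemma H_succ (n : ℕ) : H (n + 1) = H n + 1 / ((n : ℚ) + 1) := by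
  simp [H, sum_range_succ]

lemma Hgen_succ (m n : ℕ) : Hgen m (n + 1) = Hgen m n + 1 / ((n : ℚ) + 1) ^ m := by
  simp [Hgen, sum_range_succ]

lemma sum_antidiagonal_inv_fst_succ (n : ℕ) :
    ∑ p ∈ antidiagonal n, 1 / ((p.1 : ℚ) + 1) = H (n + 1) :=
  Finset.Nat.sum_antidiagonal_eq_sum_range_succ (fun i _ => 1 / ((i : ℚ) + 1)) n

lemma sum_antidiagonal_inv_mul_inv (n : ℕ) :
    ∑ p ∈ antidiagonal n, 1 / (((p.1 : ℚ) + 1) * ((p.2 : ℚ) + 1)) =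
      2 * H (n + 1) / ((n : ℚ) + 2) := by
  have partial_fractions : ∀ p ∈ antidiagonal n,
      1 / (((p.1 : ℚ) + 1) * ((p.2 : ℚ) + 1)) =
        (1 / ((p.1 : ℚ) + 1) + 1 / ((p.2 : ℚ) + 1)) / ((n : ℚ) + 2) := by
    intro p hp
    rw [← mem_antidiagonal.mp hp]
    push_cast
    field_simp
    ring
  have sum_inv_snd : ∑ p ∈ antidiagonal n, 1 / ((p.2 : ℚ) + 1) = H (n + 1) :=
    (Finset.Nat.sum_antidiagonal_swap (f := fun p => 1 / ((p.1 : ℚ) + 1))).trans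
      (sum_antidiagonal_inv_fst_succ n)
  rw [sum_congr rfl partial_fractions, ← sum_div, sum_add_distrib, sum_inv_snd,
    sum_antidiagonal_inv_fst_succ]
  ring

lemma sum_antidiagonal_H_div (n : ℕ) :
    ∑ p ∈ antidiagonal n, H p.2 / ((p.1 : ℚ) + 1) = H (n + 1) ^ 2 - Hgen 2 (n + 1) := by
  induction n with
  | zero => simp [H, Hgen]
  | succ n ih =>
    have step : ∑ p ∈ antidiagonal n, H (p.2 + 1) / ((p.1 : ℚ) + 1) =
        ∑ p ∈ antidiagonal n, H p.2 / ((p.1 : ℚ) + 1) +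
          ∑ p ∈ antidiagonal n, 1 / (((p.1 : ℚ) + 1) * ((p.2 : ℚ) + 1)) := by
      rw [← sum_add_distrib]
      refine sum_congr rfl fun p _ => ?_
      rw [H_succ]
      field_simp
    rw [Finset.Nat.sum_antidiagonal_succ', step, ih, sum_antidiagonal_inv_mul_inv,
      H_succ (n + 1), Hgen_succ 2 (n + 1)]
    rw [H_zero, zero_div, zero_add]
    push_cast
    field_simp
    ring

lemma sum_antidiagonal_H_mul_H (n : ℕ) :
    ∑ p ∈ antidiagonal n, H p.1 * H p.2 =
      ((n : ℚ) + 1) * ((H (n + 1) - 1) ^ 2 - Hgen 2 (n + 1) + 1) := by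
  induction n with
  | zero => simp [H, Hgen]
  | succ n ih =>
    have step : ∑ p ∈ antidiagonal n, H p.1 * H (p.2 + 1) =
        ∑ p ∈ antidiagonal n, H p.1 * H p.2 + ∑ p ∈ antidiagonal n, H p.2 / ((p.1 : ℚ) + 1) := by
      rw [← Finset.Nat.sum_antidiagonal_swap (f := fun p => H p.2 / ((p.1 : ℚ) + 1)),
        ← sum_add_distrib]
      refine sum_congr rfl fun p _ => ?_
      rw [H_succ]
      simp only [Prod.fst_swap, Prod.snd_swap]
      ring
    rw [Finset.Nat.sum_antidiagonal_succ', step, ih, sum_antidiagonal_H_div,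
      H_succ (n + 1), Hgen_succ 2 (n + 1)]
    rw [H_zero, mul_zero, zero_add]
    push_cast
    field_simp
    ring

theorem stmt0 (n : ℕ) :
    ∑ k ∈ Finset.range (n + 1), H k * H (n - k) =
      ((n : ℚ) + 1) * ((H (n + 1) - 1) ^ 2 - Hgen 2 (n + 1) + 1) := by
  rw [← sum_antidiagonal_H_mul_H,
    Finset.Nat.sum_antidiagonal_eq_sum_range_succ (fun i j => H i * H j)]
end

section
/- For every nonnegative integer n, ∑_{k=0}^{n} k²·H_k·H_{n-k} = (n(n+1)(2n+1)/6)·[H_{n+1}² − H_{n+1}^{(2)}] − (1/18)·n(n+1)(13n+5)·H_{n+1} + (1/108)·n(n+1)(71n+37). -/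
/-!
Write `T n = ∑_{k ≤ n} k² H_k H_{n-k}`. Since `H_{n+1-k} = H_{n-k} + 1/(n+1-k)`, the increment
`T (n+1) - T n` is `∑_{k ≤ n} k² H_k / (n+1-k)`, and `k² = (n+1)² - (n+1)(n+1-k) - k(n+1-k)`
splits it into `∑ H_k`, `∑ k H_k` and the convolution `∑_{k < n} H_k / (n-k) = H_n² - H_n^{(2)}`.
All three have closed forms, and the theorem follows by induction on `n`.
-/

open Finset

lemma sum_range_H (n : ℕ) : ∑ k ∈ range n, H k = n * H n - n := by
  induction n with
  | zero => simp
  | succ n ih =>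
    rw [sum_range_succ, ih, H_succ]
    push_cast
    field_simp
    ring

lemma sum_range_mul_H (n : ℕ) :
    ∑ k ∈ range n, (k : ℚ) * H k = n * (n - 1) / 2 * H n - n * (n - 1) / 4 := by
  induction n with
  | zero => simp
  | succ n ih =>
    rw [sum_range_succ, ih, H_succ]
    push_cast
    field_simp
    ring

lemma sum_range_one_div_sub (n : ℕ) : ∑ k ∈ range n, 1 / ((n : ℚ) - k) = H n := by
  rw [H, ← sum_range_reflect]
  refine sum_congr rfl fun k hk => ?_
  have hkn := mem_range.mp hk
  have reflected : (n : ℚ) - (n - 1 - k : ℕ) = k + 1 :=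
    sub_eq_iff_eq_add'.mpr (by exact_mod_cast (by omega : n = n - 1 - k + (k + 1)))
  rw [reflected]

lemma sum_range_one_div_mul_sub (n : ℕ) :
    ∑ k ∈ range n, 1 / (((k : ℚ) + 1) * (n - k)) = 2 * H n / (n + 1) := by
  have partial_fractions : ∀ k ∈ range n,
      1 / (((k : ℚ) + 1) * (n - k)) = (1 / ((k : ℚ) + 1) + 1 / ((n : ℚ) - k)) / (n + 1) := by
    intro k hk
    have hkn : (k : ℚ) < n := by exact_mod_cast mem_range.mp hk
    have : (n : ℚ) - k ≠ 0 := by linarith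
    field_simp
    ring
  rw [sum_congr rfl partial_fractions, ← sum_div, sum_add_distrib, sum_range_one_div_sub, ← H]
  ring

lemma sum_range_H_div_sub (n : ℕ) :
    ∑ k ∈ range n, H k / ((n : ℚ) - k) = H n ^ 2 - Hgen 2 n := by
  induction n with
  | zero => simp [H, Hgen]
  | succ n ih =>
    have shift : ∑ k ∈ range n, H (k + 1) / (((n + 1 : ℕ) : ℚ) - (k + 1 : ℕ))
        = ∑ k ∈ range n, H k / ((n : ℚ) - k) + ∑ k ∈ range n, 1 / (((k : ℚ) + 1) * (n - k)) := by
      rw [← sum_add_distrib]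
      refine sum_congr rfl fun k _ => ?_
      push_cast
      rw [H_succ, show (n : ℚ) + 1 - (k + 1) = n - k by ring, add_div, div_div]
    rw [sum_range_succ', H_zero, zero_div, add_zero, shift, ih, sum_range_one_div_mul_sub,
      H_succ, Hgen_succ]
    field_simp
    ring

lemma sum_range_sq_mul_H_div_sub (n : ℕ) :
    ∑ k ∈ range n, (k : ℚ) ^ 2 * H k / ((n : ℚ) - k) =
      n ^ 2 * ∑ k ∈ range n, H k / ((n : ℚ) - k) - n * ∑ k ∈ range n, H k
        - ∑ k ∈ range n, (k : ℚ) * H k := by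
  rw [mul_sum, mul_sum, ← sum_sub_distrib, ← sum_sub_distrib]
  refine sum_congr rfl fun k hk => ?_
  have hkn : (k : ℚ) < n := by exact_mod_cast mem_range.mp hk
  have : (n : ℚ) - k ≠ 0 := by linarith
  field_simp
  ring

lemma sum_range_mul_H_sub_succ (f : ℕ → ℚ) (n : ℕ) :
    ∑ k ∈ range (n + 1), f k * H (n + 1 - k) =
      ∑ k ∈ range (n + 1), f k * H (n - k) + ∑ k ∈ range (n + 1), f k / ((n : ℚ) + 1 - k) := by
  rw [← sum_add_distrib]
  refine sum_congr rfl fun k hk => ?_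
  have hkn : k ≤ n := Nat.lt_succ_iff.mp (mem_range.mp hk)
  rw [Nat.sub_add_comm hkn, H_succ, Nat.cast_sub hkn]
  ring

theorem stmt5 (n : ℕ) :
    ∑ k ∈ Finset.range (n + 1), (k : ℚ) ^ 2 * H k * H (n - k) =
      ((n : ℚ) * ((n : ℚ) + 1) * (2 * (n : ℚ) + 1) / 6) * ((H (n + 1)) ^ 2 - Hgen 2 (n + 1))
        - (1 / 18) * (n : ℚ) * ((n : ℚ) + 1) * (13 * (n : ℚ) + 5) * H (n + 1)
        + (1 / 108) * (n : ℚ) * ((n : ℚ) + 1) * (71 * (n : ℚ) + 37) := by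
  induction n with
  | zero => simp [H, Hgen]
  | succ n ih =>
    have increment := sum_range_sq_mul_H_div_sub (n + 1)
    rw [sum_range_H_div_sub, sum_range_H, sum_range_mul_H] at increment
    push_cast at increment
    rw [sum_range_succ, Nat.sub_self, H_zero, mul_zero, add_zero, sum_range_mul_H_sub_succ, ih,
      increment, H_succ (n + 1), Hgen_succ 2 (n + 1)]
    push_cast
    field_simp
    ring
end

section
/- For every nonnegative integer n, ∑_{k=0}^{n} k³·H_k·H_{n-k} = (n²(n+1)²/4)·[H_{n+1}² − H_{n+1}^{(2)}] − (1/12)·n²(n+1)(7n+5)·H_{n+1} + (1/72)·n²(n+1)(35n+37). -/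
open Finset

lemma natCast_add_one_sub_ne_zero {k n : ℕ} (hk : k < n + 1) : (n : ℚ) + 1 - k ≠ 0 := by
  have : (k : ℚ) < n + 1 := by exact_mod_cast hk
  linarith

lemma sum_range_succ_H (n : ℕ) :
    ∑ k ∈ range (n + 1), H k = ((n : ℚ) + 1) * H (n + 1) - ((n : ℚ) + 1) := by
  induction n with
  | zero => simp [H]
  | succ n ih =>
    rw [sum_range_succ, ih, H_succ (n + 1)]
    push_cast
    field_simp
    ring

lemma sum_range_succ_mul_H (n : ℕ) :
    ∑ k ∈ range (n + 1), (k : ℚ) * H k =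
      (n : ℚ) * (n + 1) / 2 * H (n + 1) - (n : ℚ) * (n + 1) / 4 := by
  induction n with
  | zero => simp [H]
  | succ n ih =>
    rw [sum_range_succ, ih, H_succ (n + 1)]
    push_cast
    field_simp
    ring

lemma sum_range_succ_sq_mul_H (n : ℕ) :
    ∑ k ∈ range (n + 1), (k : ℚ) ^ 2 * H k =
      (n : ℚ) * (n + 1) * (2 * n + 1) / 6 * H (n + 1) - (n : ℚ) * (n + 1) * (4 * n + 5) / 36 := by
  induction n with
  | zero => simp [H]
  | succ n ih =>
    rw [sum_range_succ, ih, H_succ (n + 1)]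
    push_cast
    field_simp
    ring

lemma sum_range_succ_one_div_add_one_sub (n : ℕ) :
    ∑ k ∈ range (n + 1), 1 / ((n : ℚ) + 1 - k) = H (n + 1) := by
  rw [H, ← sum_range_reflect]
  refine sum_congr rfl fun k hk => ?_
  rw [Nat.add_sub_cancel, Nat.cast_sub (Nat.lt_succ_iff.mp (mem_range.mp hk))]
  ring_nf

lemma sum_range_succ_H_div (n : ℕ) :
    ∑ k ∈ range (n + 1), H k / ((n : ℚ) + 1 - k) = H (n + 1) ^ 2 - Hgen 2 (n + 1) := by
  induction n with
  | zero => norm_num [H, Hgen]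
  | succ n ih =>
    have shift : ∀ k ∈ range (n + 1), H (k + 1) / ((n : ℚ) + 1 + 1 - (k + 1 : ℕ)) =
        H k / ((n : ℚ) + 1 - k) + 1 / ((n : ℚ) + 2) * (1 / ((k : ℚ) + 1) + 1 / ((n : ℚ) + 1 - k)) := by
      intro k hk
      have := natCast_add_one_sub_ne_zero (mem_range.mp hk)
      rw [H_succ, Nat.cast_add_one, show (n : ℚ) + 1 + 1 - (k + 1) = n + 1 - k by ring]
      field_simp
      ring
    rw [sum_range_succ', Nat.cast_add_one, sum_congr rfl shift]
    simp only [sum_add_distrib, ← mul_sum]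
    rw [ih, sum_range_succ_one_div_add_one_sub, ← H, H_zero, H_succ (n + 1), Hgen_succ 2 (n + 1)]
    push_cast
    field_simp
    ring

lemma sum_range_succ_cube_mul_H_div (n : ℕ) :
    ∑ k ∈ range (n + 1), (k : ℚ) ^ 3 * H k / ((n : ℚ) + 1 - k) =
      ((n : ℚ) + 1) ^ 3 * (H (n + 1) ^ 2 - Hgen 2 (n + 1))
        - ((n : ℚ) + 1) * (11 * n ^ 2 + 16 * n + 6) / 6 * H (n + 1)
        + ((n : ℚ) + 1) * (49 * n ^ 2 + 86 * n + 36) / 36 := by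
  have divide : ∀ k ∈ range (n + 1), (k : ℚ) ^ 3 * H k / ((n : ℚ) + 1 - k) =
      ((n : ℚ) + 1) ^ 3 * (H k / ((n : ℚ) + 1 - k))
        - (k : ℚ) ^ 2 * H k - ((n : ℚ) + 1) * ((k : ℚ) * H k) - ((n : ℚ) + 1) ^ 2 * H k := by
    intro k hk
    have := natCast_add_one_sub_ne_zero (mem_range.mp hk)
    field_simp
    ring
  rw [sum_congr rfl divide]
  simp only [sum_sub_distrib, ← mul_sum]
  rw [sum_range_succ_H_div, sum_range_succ_H, sum_range_succ_mul_H, sum_range_succ_sq_mul_H]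
  ring

lemma sum_range_succ_cube_mul_H_mul_H_sub (n : ℕ) :
    ∑ k ∈ range (n + 2), (k : ℚ) ^ 3 * H k * H (n + 1 - k) =
      ∑ k ∈ range (n + 1), (k : ℚ) ^ 3 * H k * H (n - k)
        + ∑ k ∈ range (n + 1), (k : ℚ) ^ 3 * H k / ((n : ℚ) + 1 - k) := by
  rw [sum_range_succ, Nat.sub_self, H_zero, mul_zero, add_zero, ← sum_add_distrib]
  refine sum_congr rfl fun k hk => ?_
  have hkn : k < n + 1 := mem_range.mp hk
  rw [Nat.sub_add_comm (Nat.lt_succ_iff.mp hkn), H_succ, Nat.cast_sub (Nat.lt_succ_iff.mp hkn),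
    show (n : ℚ) - k + 1 = n + 1 - k by ring, mul_add, mul_one_div]

theorem stmt6 (n : ℕ) :
    ∑ k ∈ Finset.range (n + 1), (k : ℚ) ^ 3 * H k * H (n - k) =
      ((n : ℚ) ^ 2 * ((n : ℚ) + 1) ^ 2 / 4) * ((H (n + 1)) ^ 2 - Hgen 2 (n + 1))
        - (1 / 12) * (n : ℚ) ^ 2 * ((n : ℚ) + 1) * (7 * (n : ℚ) + 5) * H (n + 1)
        + (1 / 72) * (n : ℚ) ^ 2 * ((n : ℚ) + 1) * (35 * (n : ℚ) + 37) := by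
  induction n with
  | zero => norm_num [H, Hgen]
  | succ n ih =>
    rw [sum_range_succ_cube_mul_H_mul_H_sub, ih, sum_range_succ_cube_mul_H_div,
      H_succ (n + 1), Hgen_succ 2 (n + 1)]
    push_cast
    field_simp
    ring
end

section
/- For every nonnegative integer n, ∑_{k=0}^{n} k³·H_k² = (n²(n+1)²/4)·H_{n+1}² − (1/24)·n(n+1)(n+2)(3n+1)·H_{n+1} + (1/288)·n(n+1)(9n²+13n+14). -/
open Finset

theorem stmt11 (n : ℕ) :
    ∑ k ∈ Finset.range (n + 1), (k : ℚ) ^ 3 * (H k) ^ 2 =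
      ((n : ℚ) ^ 2 * ((n : ℚ) + 1) ^ 2 / 4) * (H (n + 1)) ^ 2
        - (1 / 24) * (n : ℚ) * ((n : ℚ) + 1) * ((n : ℚ) + 2) * (3 * (n : ℚ) + 1) * H (n + 1)
        + (1 / 288) * (n : ℚ) * ((n : ℚ) + 1) * (9 * (n : ℚ) ^ 2 + 13 * (n : ℚ) + 14) := by
  induction n with
  | zero => simp [H]
  | succ n ih =>
    rw [sum_range_succ, ih, H_succ (n + 1)]
    push_cast
    field_simp
    ring
end

section
/- For every nonnegative integer n, ∑_{k=0}^{n} k⁴·H_k² = (n(n+1)(2n+1)(3n²+3n−1)/30)·H_{n+1}² − (1/900)(72n⁵+315n⁴+410n³+135n²−32n−30)·H_{n+1} + (1/54000)(n+1)(864n⁴+2241n³+2629n²+1466n−1800). -/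
/-!
Let `F n` be the right-hand side. Since `F 0 = 0`, it suffices that `F (n + 1) - F n = (n + 1)⁴ H_{n+1}²`.
Writing `H_{n+2} = H_{n+1} + 1/(n+2)`, both sides become polynomials in `n` and `H_{n+1}` after clearing
the denominator `n + 2`, and the identity is checked by comparing them.
-/

open Finset

theorem Finset.sum_range_succ_eq_of_succ_eq_add {M : Type*} [AddCommMonoid M] {f F : ℕ → M}
    (h₀ : F 0 = f 0) (hstep : ∀ n, F (n + 1) = F n + f (n + 1)) (n : ℕ) :
    ∑ k ∈ range (n + 1), f k = F n := by
  induction n with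
  | zero => simp [h₀]
  | succ n ih => rw [sum_range_succ, ih, hstep]

def powFourHarmonicSqSum (n : ℕ) : ℚ :=
  ((n : ℚ) * ((n : ℚ) + 1) * (2 * (n : ℚ) + 1) * (3 * (n : ℚ) ^ 2 + 3 * (n : ℚ) - 1) / 30) * (H (n + 1)) ^ 2
    - (1 / 900) * (72 * (n : ℚ) ^ 5 + 315 * (n : ℚ) ^ 4 + 410 * (n : ℚ) ^ 3 + 135 * (n : ℚ) ^ 2 - 32 * (n : ℚ) - 30) *
        H (n + 1)
    + (1 / 54000) * ((n : ℚ) + 1) *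
        (864 * (n : ℚ) ^ 4 + 2241 * (n : ℚ) ^ 3 + 2629 * (n : ℚ) ^ 2 + 1466 * (n : ℚ) - 1800)

lemma powFourHarmonicSqSum_zero : powFourHarmonicSqSum 0 = (0 : ℚ) ^ 4 * H 0 ^ 2 := by
  norm_num [powFourHarmonicSqSum, H]

lemma powFourHarmonicSqSum_succ (n : ℕ) :
    powFourHarmonicSqSum (n + 1) =
      powFourHarmonicSqSum n + ((n + 1 : ℕ) : ℚ) ^ 4 * H (n + 1) ^ 2 := by
  have hn : (n : ℚ) + 1 + 1 ≠ 0 := by positivity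
  rw [powFourHarmonicSqSum, powFourHarmonicSqSum, H_succ (n + 1)]
  push_cast
  field_simp
  ring

theorem stmt12 (n : ℕ) :
    ∑ k ∈ Finset.range (n + 1), (k : ℚ) ^ 4 * (H k) ^ 2 =
      ((n : ℚ) * ((n : ℚ) + 1) * (2 * (n : ℚ) + 1) * (3 * (n : ℚ) ^ 2 + 3 * (n : ℚ) - 1) / 30) * (H (n + 1)) ^ 2
        - (1 / 900) * (72 * (n : ℚ) ^ 5 + 315 * (n : ℚ) ^ 4 + 410 * (n : ℚ) ^ 3 + 135 * (n : ℚ) ^ 2 - 32 * (n : ℚ) - 30) *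
            H (n + 1)
        + (1 / 54000) * ((n : ℚ) + 1) *
            (864 * (n : ℚ) ^ 4 + 2241 * (n : ℚ) ^ 3 + 2629 * (n : ℚ) ^ 2 + 1466 * (n : ℚ) - 1800) :=
  sum_range_succ_eq_of_succ_eq_add (f := fun k : ℕ => (k : ℚ) ^ 4 * H k ^ 2)
    powFourHarmonicSqSum_zero powFourHarmonicSqSum_succ n
end

section
/- For every nonnegative integer n, ∑_{k=0}^{n} k·H_{n-k}² = (n(n+1)/2)·H_{n+1}² − (1/2)(3n²+5n+1)·H_{n+1} + (1/4)(n+1)(7n+2). -/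
open Finset

section Reflect

variable {R : Type*} [CommRing R]

lemma sum_range_succ_natCast_mul_reflect (f : ℕ → R) (n : ℕ) :
    ∑ k ∈ range (n + 1), (k : R) * f (n - k) = ∑ j ∈ range (n + 1), ((n : R) - j) * f j := by
  rw [← sum_range_reflect]
  refine sum_congr rfl fun j hj => ?_
  have hjn : j ≤ n := Nat.lt_succ_iff.mp (mem_range.mp hj)
  rw [Nat.add_sub_cancel, Nat.sub_sub_self hjn, Nat.cast_sub hjn]

lemma sum_range_succ_sub_mul (f : ℕ → R) (n : ℕ) :
    ∑ j ∈ range (n + 2), ((n + 1 : ℕ) - (j : R)) * f j =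
      ∑ j ∈ range (n + 1), ((n : R) - j) * f j + ∑ j ∈ range (n + 1), f j := by
  rw [sum_range_succ, sub_self, zero_mul, add_zero, ← sum_add_distrib]
  refine sum_congr rfl fun j _ => ?_
  push_cast
  ring

end Reflect

lemma sum_range_H_sq (n : ℕ) : ∑ j ∈ range (n + 1), H j ^ 2 =
    ((n : ℚ) + 1) * H (n + 1) ^ 2 - (2 * (n : ℚ) + 3) * H (n + 1) + 2 * ((n : ℚ) + 1) := by
  induction n with
  | zero => norm_num [H]
  | succ n ih =>
    rw [sum_range_succ, ih, H_succ (n + 1)]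
    push_cast
    field_simp
    ring

lemma sum_range_sub_mul_H_sq (n : ℕ) : ∑ j ∈ range (n + 1), ((n : ℚ) - j) * H j ^ 2 =
      ((n : ℚ) * ((n : ℚ) + 1) / 2) * H (n + 1) ^ 2
        - (1 / 2) * (3 * (n : ℚ) ^ 2 + 5 * (n : ℚ) + 1) * H (n + 1)
        + (1 / 4) * ((n : ℚ) + 1) * (7 * (n : ℚ) + 2) := by
  induction n with
  | zero => norm_num [H]
  | succ n ih =>
    rw [sum_range_succ_sub_mul, ih, sum_range_H_sq, H_succ (n + 1)]
    push_cast
    field_simp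
    ring

theorem stmt14 (n : ℕ) :
    ∑ k ∈ Finset.range (n + 1), (k : ℚ) * (H (n - k)) ^ 2 =
      ((n : ℚ) * ((n : ℚ) + 1) / 2) * (H (n + 1)) ^ 2
        - (1 / 2) * (3 * (n : ℚ) ^ 2 + 5 * (n : ℚ) + 1) * H (n + 1)
        + (1 / 4) * ((n : ℚ) + 1) * (7 * (n : ℚ) + 2) := by
  rw [sum_range_succ_natCast_mul_reflect (fun j => H j ^ 2), sum_range_sub_mul_H_sq]
end

section
/- For every nonnegative integer n, ∑_{k=0}^{n} k³·H_{n-k}² = (n²(n+1)²/4)·H_{n+1}² − (1/24)·n(n+1)(25n²+37n+10)·H_{n+1} + (1/288)·n(n+1)(415n²+427n+130). -/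
open Finset

lemma sum_range_cube_mul_sub (g : ℕ → ℚ) (n : ℕ) :
    ∑ k ∈ range (n + 1), (k : ℚ) ^ 3 * g (n - k) =
      (n : ℚ) ^ 3 * ∑ j ∈ range (n + 1), g j
        - 3 * (n : ℚ) ^ 2 * ∑ j ∈ range (n + 1), (j : ℚ) * g j
        + 3 * (n : ℚ) * ∑ j ∈ range (n + 1), (j : ℚ) ^ 2 * g j
        - ∑ j ∈ range (n + 1), (j : ℚ) ^ 3 * g j := by
  have reflect : ∑ k ∈ range (n + 1), (k : ℚ) ^ 3 * g (n - k) =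
      ∑ j ∈ range (n + 1), ((n : ℚ) - j) ^ 3 * g j := by
    rw [← sum_range_reflect]
    refine sum_congr rfl fun j hj => ?_
    have hjn : j ≤ n := Nat.lt_succ_iff.mp (mem_range.mp hj)
    rw [Nat.add_sub_cancel, Nat.sub_sub_self hjn, Nat.cast_sub hjn]
  rw [reflect]
  simp only [mul_sum, ← sum_sub_distrib, ← sum_add_distrib]
  exact sum_congr rfl fun j _ => by ring

lemma sum_range_sq_H (n : ℕ) : ∑ j ∈ range (n + 1), H j ^ 2 =
    ((n : ℚ) + 1) * H (n + 1) ^ 2 - (2 * n + 3) * H (n + 1) + (2 * n + 2) := by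
  induction n with
  | zero => norm_num [H]
  | succ n ih =>
    have hn : (n : ℚ) + 2 ≠ 0 := by positivity
    rw [sum_range_succ, ih, H_succ (n + 1)]
    push_cast
    field_simp
    ring

lemma sum_range_mul_sq_H (n : ℕ) : ∑ j ∈ range (n + 1), (j : ℚ) * H j ^ 2 =
    ((n : ℚ) / 2 + (n : ℚ) ^ 2 / 2) * H (n + 1) ^ 2
      + (1 / 2 - (n : ℚ) / 2 - (n : ℚ) ^ 2 / 2) * H (n + 1)
      + (-1 / 2 - (n : ℚ) / 4 + (n : ℚ) ^ 2 / 4) := by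
  induction n with
  | zero => norm_num [H]
  | succ n ih =>
    have hn : (n : ℚ) + 2 ≠ 0 := by positivity
    rw [sum_range_succ, ih, H_succ (n + 1)]
    push_cast
    field_simp
    ring

lemma sum_range_sq_mul_sq_H (n : ℕ) : ∑ j ∈ range (n + 1), (j : ℚ) ^ 2 * H j ^ 2 =
    ((n : ℚ) / 6 + (n : ℚ) ^ 2 / 2 + (n : ℚ) ^ 3 / 3) * H (n + 1) ^ 2
      + (-1 / 6 - 5 * (n : ℚ) / 18 - (n : ℚ) ^ 2 / 2 - 2 * (n : ℚ) ^ 3 / 9) * H (n + 1)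
      + (1 / 6 + 19 * (n : ℚ) / 108 + (n : ℚ) ^ 2 / 12 + 2 * (n : ℚ) ^ 3 / 27) := by
  induction n with
  | zero => norm_num [H]
  | succ n ih =>
    have hn : (n : ℚ) + 2 ≠ 0 := by positivity
    rw [sum_range_succ, ih, H_succ (n + 1)]
    push_cast
    field_simp
    ring

lemma sum_range_cube_mul_sq_H (n : ℕ) : ∑ j ∈ range (n + 1), (j : ℚ) ^ 3 * H j ^ 2 =
    ((n : ℚ) ^ 2 / 4 + (n : ℚ) ^ 3 / 2 + (n : ℚ) ^ 4 / 4) * H (n + 1) ^ 2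
      + (-(n : ℚ) / 12 - 3 * (n : ℚ) ^ 2 / 8 - 5 * (n : ℚ) ^ 3 / 12 - (n : ℚ) ^ 4 / 8) * H (n + 1)
      + (7 * (n : ℚ) / 144 + 3 * (n : ℚ) ^ 2 / 32 + 11 * (n : ℚ) ^ 3 / 144
        + (n : ℚ) ^ 4 / 32) := by
  induction n with
  | zero => norm_num [H]
  | succ n ih =>
    have hn : (n : ℚ) + 2 ≠ 0 := by positivity
    rw [sum_range_succ, ih, H_succ (n + 1)]
    push_cast
    field_simp
    ring

theorem stmt16 (n : ℕ) :
    ∑ k ∈ Finset.range (n + 1), (k : ℚ) ^ 3 * (H (n - k)) ^ 2 =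
      ((n : ℚ) ^ 2 * ((n : ℚ) + 1) ^ 2 / 4) * (H (n + 1)) ^ 2
        - (1 / 24) * (n : ℚ) * ((n : ℚ) + 1) * (25 * (n : ℚ) ^ 2 + 37 * (n : ℚ) + 10) * H (n + 1)
        + (1 / 288) * (n : ℚ) * ((n : ℚ) + 1) * (415 * (n : ℚ) ^ 2 + 427 * (n : ℚ) + 130) := by
  rw [sum_range_cube_mul_sub (fun j => H j ^ 2), sum_range_sq_H, sum_range_mul_sq_H,
    sum_range_sq_mul_sq_H, sum_range_cube_mul_sq_H]
  ring
end
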